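/- For every n ≥ 1, t ≥ 1 and every voter matrix V : Fin n → Fin t → Bool in which every column has majority Y, there exists a proposal p supported by a majority of voters such that 3·(number of matches of p) ≥ (number of matches of the all-Y proposal). That is, the relative representativeness r_V of the best majority-supported proposal is at least 1/3. -/
import Mathlib


open Finset

/-- Number of topics on which opinion vector `v` agrees with proposal `p`. -/
def agreeCount {t : ℕ} (v p : Fin t → Bool) : ℕ :=
  (univ.filter (fun j => v j = p j)).card

/-- Voter `v` supports proposal `p`: agreement on at least half the topics,
    i.e. `2 * |{j : v j = p j}| ≥ t`. -/
def Supports {t : ℕ} (v p : Fin t → Bool) : Prop :=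
  t ≤ 2 * agreeCount v p

instance {t : ℕ} (v p : Fin t → Bool) : Decidable (Supports v p) :=
  Nat.decLe _ _

/-- Proposal `p` is supported by a majority of the voters of `V`:
    `2 * |{i : voter i supports p}| ≥ n`. -/
def MajSupported {n t : ℕ} (V : Fin n → Fin t → Bool) (p : Fin t → Bool) : Prop :=
  n ≤ 2 * (univ.filter (fun i => Supports (V i) p)).card

/-- Column `j` of `V` has majority Y: `2 * |{i : V i j = true}| ≥ n`. -/
def ColMajority {n t : ℕ} (V : Fin n → Fin t → Bool) (j : Fin t) : Prop :=
  n ≤ 2 * (univ.filter (fun i => V i j = true)).card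

/-- Number of true entries of a vector. -/
def trueCount {t : ℕ} (p : Fin t → Bool) : ℕ :=
  (univ.filter (fun j => p j = true)).card

/-- Number of matching opinions between the voters of `V` and proposal `p`. -/
def matchCount {n t : ℕ} (V : Fin n → Fin t → Bool) (p : Fin t → Bool) : ℕ :=
  (univ.filter (fun ij : Fin n × Fin t => V ij.1 ij.2 = p ij.2)).card


lemma agree_tf {t : ℕ} (v : Fin t → Bool) :
    agreeCount v (fun _ => true) + agreeCount v (fun _ => false) = t := by
  have h := Finset.card_filter_add_card_filter_not
    (s := (univ : Finset (Fin t))) (p := fun j => v j = true)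
  simpa [agreeCount] using h

lemma agree_le {t : ℕ} (v p : Fin t → Bool) : agreeCount v p ≤ t := by
  simpa [agreeCount] using Finset.card_filter_le (univ : Finset (Fin t))
    (fun j => v j = p j)

lemma matchCount_eq_sum {n t : ℕ} (V : Fin n → Fin t → Bool) (p : Fin t → Bool) :
    matchCount V p = ∑ i, agreeCount (V i) p := by
  unfold matchCount agreeCount
  rw [Finset.card_filter]
  rw [Fintype.sum_prod_type]
  congr 1
  funext i
  rw [Finset.card_filter]

/-- there is a majority-supported proposal with at least a third of the
matches of the all-Y (topic-wise majority) proposal, i.e. r_V ≥ 1/3. -/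
theorem relative_third (n t : ℕ) (hn : 1 ≤ n) (ht : 1 ≤ t)
    (V : Fin n → Fin t → Bool) (hmaj : ∀ j, ColMajority V j) :
    ∃ p : Fin t → Bool, MajSupported V p ∧
      matchCount V (fun _ => true) ≤ 3 * matchCount V p := by
  by_cases hT : MajSupported V (fun _ => true)
  · exact ⟨fun _ => true, hT, Nat.le_mul_of_pos_left _ (by norm_num)⟩
  · refine ⟨fun _ => false, ?_, ?_⟩
    all_goals {
      have hkc : (univ.filter fun i => Supports (V i) (fun _ => true)).card
          + (univ.filter fun i => ¬ Supports (V i) (fun _ => true)).card = n := by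
        have h := Finset.card_filter_add_card_filter_not
          (s := (univ : Finset (Fin n))) (p := fun i => Supports (V i) (fun _ => true))
        simpa using h
      have hkn : 2 * (univ.filter fun i => Supports (V i) (fun _ => true)).card < n := by
        have := hT
        unfold MajSupported at this
        omega
      have hsub : (univ.filter fun i => ¬ Supports (V i) (fun _ => true)) ⊆
          (univ.filter fun i => Supports (V i) (fun _ => false)) := by
        intro i hi
        simp only [mem_filter, mem_univ, true_and] at hi ⊢
        have h1 := agree_tf (V i)
        unfold Supports at hi ⊢
        omega
      first
      | · -- MajSupported
          have := Finset.card_le_card hsub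
          unfold MajSupported
          omega
      | · -- count bound
          have hA : matchCount V (fun _ => true) = ∑ i, agreeCount (V i) (fun _ => true) :=
            matchCount_eq_sum V _
          have hB : matchCount V (fun _ => false) = ∑ i, agreeCount (V i) (fun _ => false) :=
            matchCount_eq_sum V _
          have hAB : matchCount V (fun _ => true) + matchCount V (fun _ => false) = n * t := by
            rw [hA, hB, ← Finset.sum_add_distrib]
            simp [agree_tf]
          have hsplit : (∑ i ∈ univ.filter (fun i => Supports (V i) (fun _ => true)),
                agreeCount (V i) (fun _ => true))
              + (∑ i ∈ univ.filter (fun i => ¬ Supports (V i) (fun _ => true)),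
                agreeCount (V i) (fun _ => true))
              = ∑ i, agreeCount (V i) (fun _ => true) :=
            Finset.sum_filter_add_sum_filter_not univ _ _
          have hY : (∑ i ∈ univ.filter (fun i => Supports (V i) (fun _ => true)),
              agreeCount (V i) (fun _ => true))
              ≤ (univ.filter fun i => Supports (V i) (fun _ => true)).card * t := by
            have := Finset.sum_le_card_nsmul
              (univ.filter (fun i => Supports (V i) (fun _ => true)))
              (fun i => agreeCount (V i) (fun _ => true)) t
              (fun i _ => agree_le (V i) _)
            simpa [smul_eq_mul] using this
          have hX : 2 * (∑ i ∈ univ.filter (fun i => ¬ Supports (V i) (fun _ => true)),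
              agreeCount (V i) (fun _ => true))
              ≤ (univ.filter fun i => ¬ Supports (V i) (fun _ => true)).card * t := by
            have := Finset.sum_le_card_nsmul
              (univ.filter (fun i => ¬ Supports (V i) (fun _ => true)))
              (fun i => 2 * agreeCount (V i) (fun _ => true)) t
              (fun i hi => by
                simp only [mem_filter, mem_univ, true_and] at hi
                unfold Supports at hi
                show 2 * agreeCount (V i) (fun _ => true) ≤ t
                omega)
            rw [← Finset.mul_sum] at this
            simpa [smul_eq_mul] using this
          have hle : (univ.filter fun i => Supports (V i) (fun _ => true)).card * t
              ≤ (univ.filter fun i => ¬ Supports (V i) (fun _ => true)).card * t :=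
            Nat.mul_le_mul_right t (by omega)
          have hnt : n * t = (univ.filter fun i => Supports (V i) (fun _ => true)).card * t
              + (univ.filter fun i => ¬ Supports (V i) (fun _ => true)).card * t := by
            rw [← Nat.add_mul, hkc]
          rw [hA] at *
          linarith [hsplit, hY, hX, hle, hnt, hAB]
    }
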